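/- For n ≥ 2, the action of the real symplectic group Sp(2n,ℝ) := {g ∈ GL_{2n}(ℝ) : gᵀ J g = J}, regarded as a subgroup of GL_{2n}(ℂ), on the projective space ℙ(ℂ^{2n}) has exactly four orbits: D⁺ = {[z] : h(z,z) > 0}, D⁻ = {[z] : h(z,z) < 0}, the set Σ₀ of lines spanned by a nonzero real vector (i.e., [z] such that the line ℂz contains a nonzero vector of ℝ^{2n}), and the complement Σ \ Σ₀ of Σ₀ in the set Σ = {[z] : h(z,z) = 0} of h-isotropic lines. -/

import Mathlib

open Matrix
open scoped ComplexOrder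

noncomputable section

/-- The complex matrix `J = [[0, -I], [I, 0]]` on `ℂ^{2n} = ℂ^n ⊕ ℂ^n`. -/
def Jmat (n : ℕ) : Matrix (Fin n ⊕ Fin n) (Fin n ⊕ Fin n) ℂ :=
  Matrix.fromBlocks (0 : Matrix (Fin n) (Fin n) ℂ) (-1) 1 0

/-- The real matrix `J = [[0, -I], [I, 0]]` on `ℝ^{2n} = ℝ^n ⊕ ℝ^n`. -/
def JmatR (n : ℕ) : Matrix (Fin n ⊕ Fin n) (Fin n ⊕ Fin n) ℝ :=
  Matrix.fromBlocks (0 : Matrix (Fin n) (Fin n) ℝ) (-1) 1 0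

/-- The Hermitian form `h(z, w) = (i/2) z̄ᵀ J w` of signature `(n, n)` on
`ℂ^{2n}`. -/
def hform (n : ℕ) (z w : Fin n ⊕ Fin n → ℂ) : ℂ :=
  (Complex.I / 2) * (star z ⬝ᵥ (Jmat n *ᵥ w))

/-- The real symplectic group `Sp(2n, ℝ) = {g ∈ GL(2n, ℝ) : gᵀ J g = J}`. -/
def SpR (n : ℕ) : Set (Matrix (Fin n ⊕ Fin n) (Fin n ⊕ Fin n) ℝ) :=
  {g | g.det ≠ 0 ∧ gᵀ * JmatR n * g = JmatR n}

/-- The set `D⁺` of `h`-positive lines in `ℙ(ℂ^{2n})`. -/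
def Dpos (n : ℕ) : Set (Projectivization ℂ (Fin n ⊕ Fin n → ℂ)) :=
  {x | ∃ (z : Fin n ⊕ Fin n → ℂ) (hz : z ≠ 0),
    0 < hform n z z ∧ Projectivization.mk ℂ z hz = x}

/-- The set `D⁻` of `h`-negative lines in `ℙ(ℂ^{2n})`. -/
def Dneg (n : ℕ) : Set (Projectivization ℂ (Fin n ⊕ Fin n → ℂ)) :=
  {x | ∃ (z : Fin n ⊕ Fin n → ℂ) (hz : z ≠ 0),
    hform n z z < 0 ∧ Projectivization.mk ℂ z hz = x}

/-- The set `Σ` of `h`-isotropic lines in `ℙ(ℂ^{2n})`. -/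
def Siso (n : ℕ) : Set (Projectivization ℂ (Fin n ⊕ Fin n → ℂ)) :=
  {x | ∃ (z : Fin n ⊕ Fin n → ℂ) (hz : z ≠ 0),
    hform n z z = 0 ∧ Projectivization.mk ℂ z hz = x}

/-- The set `Σ₀` of lines spanned by a nonzero real vector. -/
def Sreal (n : ℕ) : Set (Projectivization ℂ (Fin n ⊕ Fin n → ℂ)) :=
  {x | ∃ (v : Fin n ⊕ Fin n → ℝ) (hv : (fun i => (v i : ℂ)) ≠ 0),
    Projectivization.mk ℂ (fun i => (v i : ℂ)) hv = x}

/-- Two points of `ℙ(ℂ^{2n})` lie in the same `Sp(2n,ℝ)`-orbit, where a real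
symplectic matrix acts on `ℂ^{2n}` via its complexification. -/
def SameOrbitSp (n : ℕ) (x y : Projectivization ℂ (Fin n ⊕ Fin n → ℂ)) : Prop :=
  ∃ g ∈ SpR n, ∃ (z : Fin n ⊕ Fin n → ℂ) (hz : z ≠ 0)
    (hgz : (g.map Complex.ofReal) *ᵥ z ≠ 0),
      Projectivization.mk ℂ z hz = x ∧
        Projectivization.mk ℂ ((g.map Complex.ofReal) *ᵥ z) hgz = y

/-!
Write `z = a + i b` with `a, b ∈ ℝ^{2n}`. Then `h(z, z) = ω(b, a)` for the standard symplectic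
form `ω(x, y) = xᵀ J y`, a real matrix acts on `a` and `b` separately, and `[z]` is a real line
exactly when `a` and `b` are linearly dependent. Rescaling `z` by a positive real moves `ω(b, a)`
freely within its sign, so the orbit classification reduces to two transitivity statements for
`Sp(2n, ℝ)`: on nonzero vectors, and on linearly independent pairs `(x, y)` with prescribed
`ω(x, y)`. Both follow by composing symplectic transvections `u ↦ u + c ω(u, v) v`: one moves
`x` to `y` whenever `ω(x, y) ≠ 0`, fixing the `ω`-orthogonal of `y - x`, and otherwise one passes
through an intermediate vector.
-/

def symplecticForm (l K : Type*) [Fintype l] [DecidableEq l] [CommRing K] :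
    LinearMap.BilinForm K (l ⊕ l → K) :=
  toLinearMap₂' K (J l K)

local notation "ω" => symplecticForm _ _

theorem Submodule.exists_mem_apply_ne_zero_and_apply_ne_zero {R M N : Type*} [Semiring R]
    [AddCommMonoid M] [AddCommMonoid N] [Module R M] [Module R N] {p : Submodule R M}
    {f g : M →ₗ[R] N} (hf : ∃ a ∈ p, f a ≠ 0) (hg : ∃ b ∈ p, g b ≠ 0) :
    ∃ c ∈ p, f c ≠ 0 ∧ g c ≠ 0 := by
  obtain ⟨a, ha, hfa⟩ := hf
  obtain ⟨b, hb, hgb⟩ := hg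
  by_cases hga : g a = 0
  · by_cases hfb : f b = 0
    · exact ⟨a + b, p.add_mem ha hb, by simpa [hfb], by simpa [hga]⟩
    · exact ⟨b, hb, hfb, hgb⟩
  · exact ⟨a, ha, hfa, hga⟩

theorem linearIndependent_pair_mulVec_iff {m K : Type*} [Fintype m] [DecidableEq m] [Field K]
    {g : Matrix m m K} (hg : IsUnit g) {x y : m → K} :
    LinearIndependent K ![g *ᵥ x, g *ᵥ y] ↔ LinearIndependent K ![x, y] := by
  have hinj : LinearMap.ker (toLin' g) = ⊥ :=
    LinearMap.ker_eq_bot.2 (mulVec_injective_iff_isUnit.2 hg)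
  have hcomp : ⇑(toLin' g) ∘ ![x, y] = ![g *ᵥ x, g *ᵥ y] := by
    ext i : 1
    fin_cases i <;> rfl
  rw [← hcomp, LinearMap.linearIndependent_iff (toLin' g) hinj]

section Symplectic

variable {l K : Type*} [Fintype l] [DecidableEq l]

section CommRing
variable [CommRing K]

theorem symplecticForm_apply (x y : l ⊕ l → K) : ω x y = x ⬝ᵥ (J l K *ᵥ y) :=
  toLinearMap₂'_apply' _ _ _

theorem symplecticForm_isAlt : LinearMap.IsAlt (symplecticForm l K) := by
  intro x
  simp [symplecticForm_apply, J, fromBlocks_mulVec, dotProduct, Fintype.sum_sum_type,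
    Matrix.neg_mulVec, mul_comm]

theorem mem_symplecticGroup_iff_forall {A : Matrix (l ⊕ l) (l ⊕ l) K} :
    A ∈ symplecticGroup l K ↔ ∀ x y, ω (A *ᵥ x) (A *ᵥ y) = ω x y := by
  let e : Matrix (l ⊕ l) (l ⊕ l) K ≃ₗ[K] LinearMap.BilinForm K (l ⊕ l → K) := toLinearMap₂' K
  rw [SymplecticGroup.mem_iff', ← e.injective.eq_iff, ← toLinearMap₂'_comp]
  simp [LinearMap.ext_iff, symplecticForm, e]

variable (K) in
def symplecticTransvection (v : l ⊕ l → K) (c : K) : Matrix (l ⊕ l) (l ⊕ l) K :=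
  LinearMap.toMatrix' (LinearMap.transvection (c • (symplecticForm l K).flip v) v)

theorem symplecticTransvection_mulVec (v : l ⊕ l → K) (c : K) (u : l ⊕ l → K) :
    symplecticTransvection K v c *ᵥ u = u + (c * ω u v) • v := by
  simp [symplecticTransvection, LinearMap.toMatrix'_mulVec, LinearMap.transvection.apply]

theorem symplecticTransvection_mem (v : l ⊕ l → K) (c : K) :
    symplecticTransvection K v c ∈ symplecticGroup l K := by
  have h := symplecticForm_isAlt (l := l) (K := K)
  refine mem_symplecticGroup_iff_forall.2 fun x y => ?_
  simp only [symplecticTransvection_mulVec, map_add, map_smul, LinearMap.add_apply,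
    LinearMap.smul_apply, h.self_eq_zero, smul_eq_mul]
  rw [← LinearMap.IsAlt.neg h v y]
  ring

theorem symplecticForm_single (i j : l ⊕ l) : ω (Pi.single i 1) (Pi.single j 1) = J l K i j := by
  simp [symplecticForm_apply, mulVec_single, single_dotProduct]

end CommRing

section Field
variable [Field K] {x y x' y' : l ⊕ l → K}

theorem symplecticForm_separatingLeft : (symplecticForm l K).SeparatingLeft :=
  LinearMap.separatingLeft_toLinearMap₂'_of_det_ne_zero' (isUnit_det_J l K).ne_zero

theorem symplecticForm_exists_ne_zero (hx : x ≠ 0) : ∃ y, ω x y ≠ 0 :=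
  not_forall.1 (mt (symplecticForm_separatingLeft x) hx)

theorem linearIndependent_pair_of_symplecticForm_ne_zero (h : ω x y ≠ 0) :
    LinearIndependent K ![x, y] := by
  have halt := symplecticForm_isAlt (l := l) (K := K)
  refine LinearIndependent.pair_iff.2 fun s t hst => ⟨?_, ?_⟩
  · simpa [halt.self_eq_zero, h] using congrArg (fun v => ω v y) hst
  · simpa [halt.self_eq_zero, h] using congrArg (ω x) hst

theorem exists_symplecticForm_eq_zero_and_ne_zero (h : LinearIndependent K ![x, y]) :
    ∃ w, ω x w = 0 ∧ ω y w ≠ 0 := by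
  by_contra! hcon
  obtain ⟨w₀, hw₀⟩ := symplecticForm_exists_ne_zero (x := x) (h.ne_zero 0)
  set c := ω y w₀ / ω x w₀
  -- test `y - c • x` against the projection of `w` to `ker (ω x)` along `w₀`
  have hyx : y - c • x = 0 := symplecticForm_separatingLeft _ fun w => by
    have := hcon (w - (ω x w / ω x w₀) • w₀) (by simp [hw₀])
    simp only [map_sub, map_smul, smul_eq_mul, LinearMap.sub_apply, LinearMap.smul_apply] at this ⊢
    rw [sub_eq_zero] at this
    rw [this]; simp only [c]; field_simp; ring
  have := (LinearIndependent.pair_iff.1 h (-c) 1 (by rw [← hyx]; module)).2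
  exact one_ne_zero this

theorem exists_symplectic_mulVec_eq_of_symplecticForm_ne_zero (h : ω x y ≠ 0) :
    ∃ g ∈ symplecticGroup l K, g *ᵥ x = y ∧ ∀ w, ω w (y - x) = 0 → g *ᵥ w = w := by
  refine ⟨symplecticTransvection K (y - x) (ω x y)⁻¹, symplecticTransvection_mem _ _, ?_, ?_⟩
  · rw [symplecticTransvection_mulVec, map_sub, symplecticForm_isAlt.self_eq_zero, sub_zero,
      inv_mul_cancel₀ h, one_smul, add_sub_cancel]
  · intro w hw
    rw [symplecticTransvection_mulVec, hw, mul_zero, zero_smul, add_zero]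

theorem exists_symplectic_mulVec_eq (hx : x ≠ 0) (hy : y ≠ 0) :
    ∃ g ∈ symplecticGroup l K, g *ᵥ x = y := by
  obtain ⟨z, -, hxz, hyz⟩ := Submodule.exists_mem_apply_ne_zero_and_apply_ne_zero (p := ⊤)
    (f := ω x) (g := ω y) (by simpa using symplecticForm_exists_ne_zero hx)
    (by simpa using symplecticForm_exists_ne_zero hy)
  obtain ⟨g₁, hg₁, hg₁x, -⟩ := exists_symplectic_mulVec_eq_of_symplecticForm_ne_zero hxz
  obtain ⟨g₂, hg₂, hg₂z, -⟩ := exists_symplectic_mulVec_eq_of_symplecticForm_ne_zero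
    (x := z) (y := y) (by rwa [← LinearMap.IsAlt.neg symplecticForm_isAlt, neg_ne_zero])
  exact ⟨g₂ * g₁, mul_mem hg₂ hg₁, by rw [← mulVec_mulVec, hg₁x, hg₂z]⟩

theorem exists_symplectic_fix_mulVec_eq_of_symplecticForm_ne_zero (hx : ω x (y' - y) = 0)
    (h : ω y y' ≠ 0) : ∃ g ∈ symplecticGroup l K, g *ᵥ x = x ∧ g *ᵥ y = y' := by
  obtain ⟨g, hg, hgy, hfix⟩ := exists_symplectic_mulVec_eq_of_symplecticForm_ne_zero h
  exact ⟨g, hg, hfix x hx, hgy⟩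

theorem exists_symplectic_fix_mulVec_eq (hy : LinearIndependent K ![x, y])
    (hy' : LinearIndependent K ![x, y']) (h : ω x y = ω x y') :
    ∃ g ∈ symplecticGroup l K, g *ᵥ x = x ∧ g *ᵥ y = y' := by
  have halt := symplecticForm_isAlt (l := l) (K := K)
  have hx : ω x (y' - y) = 0 := by rw [map_sub, h, sub_self]
  rcases ne_or_eq (ω y y') 0 with hyy' | hyy'
  · exact exists_symplectic_fix_mulVec_eq_of_symplecticForm_ne_zero hx hyy'
  -- pass through `y + t`, where `t ⊥ x` pairs nontrivially with both `y` and `y'`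
  obtain ⟨t, ht, hyt, hy't⟩ := Submodule.exists_mem_apply_ne_zero_and_apply_ne_zero
    (p := LinearMap.ker (ω x)) (f := ω y) (g := ω y')
    (exists_symplecticForm_eq_zero_and_ne_zero hy) (exists_symplecticForm_eq_zero_and_ne_zero hy')
  rw [LinearMap.mem_ker] at ht
  obtain ⟨g₁, hg₁, hg₁x, hg₁y⟩ := exists_symplectic_fix_mulVec_eq_of_symplecticForm_ne_zero
    (y := y) (y' := y + t) (by simpa using ht) (by simpa [halt.self_eq_zero] using hyt)
  obtain ⟨g₂, hg₂, hg₂x, hg₂y⟩ := exists_symplectic_fix_mulVec_eq_of_symplecticForm_ne_zero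
    (x := x) (y := y + t) (y' := y') (by simp [ht, h]) (by
      rwa [map_add, LinearMap.add_apply, hyy', zero_add, ← LinearMap.IsAlt.neg halt, neg_ne_zero])
  exact ⟨g₂ * g₁, mul_mem hg₂ hg₁, by rw [← mulVec_mulVec, hg₁x, hg₂x],
    by rw [← mulVec_mulVec, hg₁y, hg₂y]⟩

theorem exists_symplectic_mulVec_pair_eq (h : LinearIndependent K ![x, y])
    (h' : LinearIndependent K ![x', y']) (hω : ω x y = ω x' y') :
    ∃ g ∈ symplecticGroup l K, g *ᵥ x = x' ∧ g *ᵥ y = y' := by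
  obtain ⟨g₁, hg₁, hg₁x⟩ :=
    exists_symplectic_mulVec_eq (x := x) (y := x') (h.ne_zero 0) (h'.ne_zero 0)
  have hg₁u : IsUnit g₁ := (isUnit_iff_isUnit_det g₁).2 (SymplecticGroup.symplectic_det hg₁)
  obtain ⟨g₂, hg₂, hg₂x, hg₂y⟩ := exists_symplectic_fix_mulVec_eq (y := g₁ *ᵥ y) (y' := y')
    (by rwa [← hg₁x, linearIndependent_pair_mulVec_iff hg₁u]) h'
    (by rw [← hω, ← hg₁x, mem_symplecticGroup_iff_forall.1 hg₁])
  exact ⟨g₂ * g₁, mul_mem hg₂ hg₁, by rw [← mulVec_mulVec, hg₁x, hg₂x],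
    by rw [← mulVec_mulVec, hg₂y]⟩

end Field
end Symplectic

section Complexification

variable {ι : Type*}

def ofReIm (a b : ι → ℝ) : ι → ℂ := fun k => ⟨a k, b k⟩

theorem ofReIm_ne_zero (a b : ι → ℝ) (ha : a ≠ 0) : ofReIm a b ≠ 0 :=
  fun h => ha (funext fun k => congrArg Complex.re (congrFun h k))

theorem re_comp_smul (c : ℂ) (z : ι → ℂ) :
    Complex.re ∘ (c • z) = c.re • (Complex.re ∘ z) - c.im • (Complex.im ∘ z) := by
  ext i; simp

theorem im_comp_smul (c : ℂ) (z : ι → ℂ) :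
    Complex.im ∘ (c • z) = c.im • (Complex.re ∘ z) + c.re • (Complex.im ∘ z) := by
  ext i; simp [add_comm]

theorem exists_smul_im_comp_eq_zero_iff (z : ι → ℂ) :
    (∃ c : ℂ, c ≠ 0 ∧ Complex.im ∘ (c • z) = 0) ↔
      ¬ LinearIndependent ℝ ![Complex.re ∘ z, Complex.im ∘ z] := by
  simp only [im_comp_smul, LinearIndependent.pair_iff, not_forall, not_and_or, exists_prop]
  constructor
  · rintro ⟨c, hc, h⟩
    refine ⟨c.im, c.re, h, ?_⟩
    by_contra! hre
    exact hc (Complex.ext hre.2 hre.1)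
  · rintro ⟨s, t, h, hst⟩
    refine ⟨⟨t, s⟩, fun h0 => ?_, h⟩
    simp only [Complex.ext_iff, Complex.zero_re, Complex.zero_im] at h0
    tauto

variable [Fintype ι] {κ : Type*} (g : Matrix κ ι ℝ) (z : ι → ℂ)

theorem re_comp_map_ofReal_mulVec :
    Complex.re ∘ (g.map Complex.ofReal *ᵥ z) = g *ᵥ (Complex.re ∘ z) := by
  ext i; simp [mulVec, dotProduct, Complex.re_sum]

theorem im_comp_map_ofReal_mulVec :
    Complex.im ∘ (g.map Complex.ofReal *ᵥ z) = g *ᵥ (Complex.im ∘ z) := by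
  ext i; simp [mulVec, dotProduct, Complex.im_sum]

theorem map_ofReal_mulVec_eq {g : Matrix κ ι ℝ} {z : ι → ℂ} {w : κ → ℂ}
    (hre : g *ᵥ (Complex.re ∘ z) = Complex.re ∘ w)
    (him : g *ᵥ (Complex.im ∘ z) = Complex.im ∘ w) : g.map Complex.ofReal *ᵥ z = w := by
  ext i : 1
  apply Complex.ext
  · exact congrFun ((re_comp_map_ofReal_mulVec g z).trans hre) i
  · exact congrFun ((im_comp_map_ofReal_mulVec g z).trans him) i

end Complexification

section HermitianForm

variable {l : Type*} [Fintype l] [DecidableEq l]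

def hformReal (z : l ⊕ l → ℂ) : ℝ := ω (Complex.im ∘ z) (Complex.re ∘ z)

theorem hform_self {n : ℕ} (z : Fin n ⊕ Fin n → ℂ) : hform n z z = hformReal z := by
  simp only [hform, hformReal, symplecticForm_apply, Jmat, J, fromBlocks_mulVec, dotProduct,
    Fintype.sum_sum_type, Matrix.neg_mulVec, one_mulVec, zero_mulVec, ← Finset.sum_add_distrib,
    Finset.mul_sum, Complex.ofReal_sum]
  refine Finset.sum_congr rfl fun i _ => ?_
  apply Complex.ext <;> simp <;> ring

theorem hformReal_smul (c : ℂ) (z : l ⊕ l → ℂ) :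
    hformReal (c • z) = Complex.normSq c * hformReal z := by
  have halt := symplecticForm_isAlt (l := l) (K := ℝ)
  simp only [hformReal, re_comp_smul, im_comp_smul, map_add, map_sub, map_smul,
    LinearMap.add_apply, LinearMap.smul_apply, halt.self_eq_zero, smul_eq_mul]
  rw [← LinearMap.IsAlt.neg halt, Complex.normSq_apply]
  ring

theorem hformReal_map_ofReal_mulVec {g : Matrix (l ⊕ l) (l ⊕ l) ℝ} (hg : g ∈ symplecticGroup l ℝ)
    (z : l ⊕ l → ℂ) : hformReal (g.map Complex.ofReal *ᵥ z) = hformReal z := by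
  rw [hformReal, re_comp_map_ofReal_mulVec, im_comp_map_ofReal_mulVec,
    mem_symplecticGroup_iff_forall.1 hg, hformReal]

theorem hformReal_ofReIm (a b : l ⊕ l → ℝ) : hformReal (ofReIm a b) = ω b a := rfl

theorem linearIndependent_re_im_of_hformReal_ne_zero {z : l ⊕ l → ℂ} (h : hformReal z ≠ 0) :
    LinearIndependent ℝ ![Complex.re ∘ z, Complex.im ∘ z] :=
  LinearIndependent.pair_symm_iff.1 (linearIndependent_pair_of_symplecticForm_ne_zero h)

end HermitianForm

section Orbits

open Projectivization

variable {n : ℕ}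

theorem exists_mk_eq_and_hformReal_iff {p : ℝ → Prop} (hp : ∀ r, 0 < r → ∀ s, p (r * s) ↔ p s)
    {z : Fin n ⊕ Fin n → ℂ} (hz : z ≠ 0) :
    (∃ (w : Fin n ⊕ Fin n → ℂ) (hw : w ≠ 0), p (hformReal w) ∧ mk ℂ w hw = mk ℂ z hz) ↔
      p (hformReal z) := by
  refine ⟨fun ⟨w, hw, hpw, heq⟩ => ?_, fun h => ⟨z, hz, h, rfl⟩⟩
  obtain ⟨a, rfl⟩ := (mk_eq_mk_iff ℂ _ _ hw hz).1 heq
  rwa [Units.smul_def, hformReal_smul, hp _ (Complex.normSq_pos.2 a.ne_zero)] at hpw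

theorem mk_mem_Dpos_iff {z : Fin n ⊕ Fin n → ℂ} (hz : z ≠ 0) :
    mk ℂ z hz ∈ Dpos n ↔ 0 < hformReal z := by
  simp only [Dpos, Set.mem_ofPred_eq, hform_self, Complex.zero_lt_real]
  exact exists_mk_eq_and_hformReal_iff (fun r hr s => mul_pos_iff_of_pos_left hr) hz

theorem mk_mem_Dneg_iff {z : Fin n ⊕ Fin n → ℂ} (hz : z ≠ 0) :
    mk ℂ z hz ∈ Dneg n ↔ hformReal z < 0 := by
  simp only [Dneg, Set.mem_ofPred_eq, hform_self, ← Complex.ofReal_zero, Complex.real_lt_real]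
  exact exists_mk_eq_and_hformReal_iff (p := (· < 0)) (fun r hr s => by
    rw [← neg_pos, ← mul_neg, mul_pos_iff_of_pos_left hr, neg_pos]) hz

theorem mk_mem_Siso_iff {z : Fin n ⊕ Fin n → ℂ} (hz : z ≠ 0) :
    mk ℂ z hz ∈ Siso n ↔ hformReal z = 0 := by
  simp only [Siso, Set.mem_ofPred_eq, hform_self, Complex.ofReal_eq_zero]
  exact exists_mk_eq_and_hformReal_iff (p := (· = 0)) (fun r hr s => by simp [hr.ne']) hz

theorem mk_mem_Sreal_iff {z : Fin n ⊕ Fin n → ℂ} (hz : z ≠ 0) :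
    mk ℂ z hz ∈ Sreal n ↔ ¬ LinearIndependent ℝ ![Complex.re ∘ z, Complex.im ∘ z] := by
  rw [← exists_smul_im_comp_eq_zero_iff]
  constructor
  · rintro ⟨v, hv, heq⟩
    obtain ⟨a, ha⟩ := (mk_eq_mk_iff ℂ _ _ hv hz).1 heq
    exact ⟨a, a.ne_zero, by rw [← Units.smul_def, ha]; ext; simp⟩
  · rintro ⟨c, hc, h⟩
    have hreal : (fun i => ((Complex.re ∘ (c • z)) i : ℂ)) = c • z := by
      ext i : 1
      exact Complex.ext rfl (congrFun h i).symm
    have hv : (fun i => ((Complex.re ∘ (c • z)) i : ℂ)) ≠ 0 := hreal ▸ smul_ne_zero hc hz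
    exact ⟨_, hv, (mk_eq_mk_iff' ℂ _ _ hv hz).2 ⟨c, hreal.symm⟩⟩

theorem mem_SpR_iff {g : Matrix (Fin n ⊕ Fin n) (Fin n ⊕ Fin n) ℝ} :
    g ∈ SpR n ↔ g ∈ symplecticGroup (Fin n) ℝ :=
  ⟨fun h => SymplecticGroup.mem_iff'.2 h.2,
    fun h => ⟨(SymplecticGroup.symplectic_det h).ne_zero, SymplecticGroup.mem_iff'.1 h⟩⟩

theorem sameOrbitSp_mk_mk {g : Matrix (Fin n ⊕ Fin n) (Fin n ⊕ Fin n) ℝ}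
    (hg : g ∈ symplecticGroup (Fin n) ℝ) {z w : Fin n ⊕ Fin n → ℂ} (hz : z ≠ 0) (hw : w ≠ 0)
    (h : g.map Complex.ofReal *ᵥ z = w) : SameOrbitSp n (mk ℂ z hz) (mk ℂ w hw) := by
  subst h
  exact ⟨g, mem_SpR_iff.2 hg, z, hz, hw, rfl, rfl⟩

theorem sameOrbitSp_of_linearIndependent {z w : Fin n ⊕ Fin n → ℂ} (hz : z ≠ 0) (hw : w ≠ 0)
    (hzi : LinearIndependent ℝ ![Complex.re ∘ z, Complex.im ∘ z])
    (hwi : LinearIndependent ℝ ![Complex.re ∘ w, Complex.im ∘ w])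
    (h : hformReal z = hformReal w) : SameOrbitSp n (mk ℂ z hz) (mk ℂ w hw) := by
  obtain ⟨g, hg, hgim, hgre⟩ := exists_symplectic_mulVec_pair_eq
    (x := Complex.im ∘ z) (y := Complex.re ∘ z) (x' := Complex.im ∘ w) (y' := Complex.re ∘ w)
    (LinearIndependent.pair_symm_iff.1 hzi) (LinearIndependent.pair_symm_iff.1 hwi) h
  exact sameOrbitSp_mk_mk hg hz hw (map_ofReal_mulVec_eq hgre hgim)

theorem sameOrbitSp_of_hformReal_mul_pos {z w : Fin n ⊕ Fin n → ℂ} (hz : z ≠ 0) (hw : w ≠ 0)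
    (h : 0 < hformReal z * hformReal w) : SameOrbitSp n (mk ℂ z hz) (mk ℂ w hw) := by
  have hzw : hformReal z ≠ 0 := left_ne_zero_of_mul h.ne'
  have hww : hformReal w ≠ 0 := right_ne_zero_of_mul h.ne'
  have hq : 0 < hformReal z / hformReal w := by
    simpa [mul_div_mul_right _ _ hww] using div_pos h (mul_self_pos.2 hww)
  set t : ℝ := √(hformReal z / hformReal w)
  have ht : (t : ℂ) ≠ 0 := Complex.ofReal_ne_zero.2 (Real.sqrt_pos.2 hq).ne'
  have htw : hformReal ((t : ℂ) • w) = hformReal z := by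
    rw [hformReal_smul, Complex.normSq_ofReal, Real.mul_self_sqrt hq.le, div_mul_cancel₀ _ hww]
  have hmk : mk ℂ ((t : ℂ) • w) (smul_ne_zero ht hw) = mk ℂ w hw :=
    (mk_eq_mk_iff' ℂ _ _ _ hw).2 ⟨t, rfl⟩
  rw [← hmk]
  exact sameOrbitSp_of_linearIndependent hz _ (linearIndependent_re_im_of_hformReal_ne_zero hzw)
    (linearIndependent_re_im_of_hformReal_ne_zero (htw ▸ hzw)) htw.symm

theorem sameOrbitSp_mk_ofReal {v w : Fin n ⊕ Fin n → ℝ} (hv : (fun i => (v i : ℂ)) ≠ 0)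
    (hw : (fun i => (w i : ℂ)) ≠ 0) : SameOrbitSp n (mk ℂ _ hv) (mk ℂ _ hw) := by
  obtain ⟨g, hg, hgv⟩ := exists_symplectic_mulVec_eq (x := v) (y := w)
    (by rintro rfl; exact hv (by ext; simp)) (by rintro rfl; exact hw (by ext; simp))
  exact sameOrbitSp_mk_mk hg hv hw (map_ofReal_mulVec_eq hgv (by ext; simp [mulVec, dotProduct]))

theorem sameOrbitSp_iff (x y : Projectivization ℂ (Fin n ⊕ Fin n → ℂ)) :
    SameOrbitSp n x y ↔
      (x ∈ Dpos n ∧ y ∈ Dpos n) ∨ (x ∈ Dneg n ∧ y ∈ Dneg n) ∨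
        (x ∈ Sreal n ∧ y ∈ Sreal n) ∨
          (x ∈ Siso n \ Sreal n ∧ y ∈ Siso n \ Sreal n) := by
  constructor
  · rintro ⟨g, hg, z, hz, hgz, rfl, rfl⟩
    have hg' := mem_SpR_iff.1 hg
    have hgu : IsUnit g := (isUnit_iff_isUnit_det g).2 (SymplecticGroup.symplectic_det hg')
    simp only [Set.mem_sdiff, mk_mem_Dpos_iff, mk_mem_Dneg_iff, mk_mem_Siso_iff, mk_mem_Sreal_iff,
      hformReal_map_ofReal_mulVec hg', re_comp_map_ofReal_mulVec, im_comp_map_ofReal_mulVec,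
      linearIndependent_pair_mulVec_iff hgu]
    rcases lt_trichotomy (hformReal z) 0 with h | h | h
    · exact Or.inr (Or.inl ⟨h, h⟩)
    · by_cases hL : LinearIndependent ℝ ![Complex.re ∘ z, Complex.im ∘ z] <;> simp [h, hL]
    · exact Or.inl ⟨h, h⟩
  · induction x using Projectivization.ind with | h z hz => ?_
    induction y using Projectivization.ind with | h w hw => ?_
    rintro (⟨hx, hy⟩ | ⟨hx, hy⟩ | ⟨⟨v, hv, hvz⟩, ⟨v', hv', hvw⟩⟩ | ⟨⟨hx, hx'⟩, ⟨hy, hy'⟩⟩)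
    · rw [mk_mem_Dpos_iff] at hx hy
      exact sameOrbitSp_of_hformReal_mul_pos hz hw (mul_pos hx hy)
    · rw [mk_mem_Dneg_iff] at hx hy
      exact sameOrbitSp_of_hformReal_mul_pos hz hw (mul_pos_of_neg_of_neg hx hy)
    · rw [← hvz, ← hvw]
      exact sameOrbitSp_mk_ofReal hv hv'
    · rw [mk_mem_Siso_iff] at hx hy
      rw [mk_mem_Sreal_iff, not_not] at hx' hy'
      exact sameOrbitSp_of_linearIndependent hz hw hx' hy' (hx.trans hy.symm)

theorem Sreal_subset_Siso : Sreal n ⊆ Siso n := by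
  rintro _ ⟨v, hv, rfl⟩
  rw [mk_mem_Siso_iff]
  simp [hformReal, Function.comp_def, ← Pi.zero_def]

theorem Dpos_union_Dneg_union_Siso : Dpos n ∪ Dneg n ∪ Siso n = Set.univ := by
  refine Set.eq_univ_of_forall fun x => ?_
  induction x using Projectivization.ind with | h z hz => ?_
  simp only [Set.mem_union, mk_mem_Dpos_iff, mk_mem_Dneg_iff, mk_mem_Siso_iff]
  rcases lt_trichotomy (hformReal z) 0 with h | h | h <;> simp [h]

theorem Dpos_nonempty (hn : 0 < n) : (Dpos n).Nonempty :=
  ⟨_, (mk_mem_Dpos_iff (ofReIm_ne_zero (Pi.single (.inl ⟨0, hn⟩) 1) (Pi.single (.inr ⟨0, hn⟩) 1)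
    (by simp))).2 (by simp [hformReal_ofReIm, symplecticForm_single, J])⟩

theorem Dneg_nonempty (hn : 0 < n) : (Dneg n).Nonempty :=
  ⟨_, (mk_mem_Dneg_iff (ofReIm_ne_zero (Pi.single (.inr ⟨0, hn⟩) 1) (Pi.single (.inl ⟨0, hn⟩) 1)
    (by simp))).2 (by simp [hformReal_ofReIm, symplecticForm_single, J])⟩

theorem Sreal_nonempty (hn : 0 < n) : (Sreal n).Nonempty :=
  ⟨_, Pi.single (Sum.inl ⟨0, hn⟩) 1, fun h => by simpa using congrFun h (.inl ⟨0, hn⟩), rfl⟩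

theorem Siso_diff_Sreal_nonempty (hn : 1 < n) : (Siso n \ Sreal n).Nonempty := by
  set i₀ : Fin n ⊕ Fin n := .inl ⟨0, by omega⟩
  set i₁ : Fin n ⊕ Fin n := .inl ⟨1, hn⟩
  have hz := ofReIm_ne_zero (Pi.single i₀ (1 : ℝ)) (Pi.single i₁ 1) (by simp)
  refine ⟨_, (mk_mem_Siso_iff hz).2
    (by simp [hformReal_ofReIm, symplecticForm_single, J, i₀, i₁]), ?_⟩
  rw [mk_mem_Sreal_iff, not_not, LinearIndependent.pair_iff]
  intro s t hst
  exact ⟨by simpa [ofReIm, Pi.single_apply, i₀, i₁] using congrFun hst i₀,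
    by simpa [ofReIm, Pi.single_apply, i₀, i₁] using congrFun hst i₁⟩

end Orbits

/-- For `n ≥ 2`, the action of `Sp(2n,ℝ)` on `ℙ(ℂ^{2n})` has exactly four
orbits: `D⁺`, `D⁻`, the set `Σ₀` of real lines, and the complement
`Σ \ Σ₀` of `Σ₀` in the set `Σ` of `h`-isotropic lines. -/
theorem SpR_four_orbits (n : ℕ) (hn : 2 ≤ n) :
    (Dpos n).Nonempty ∧ (Dneg n).Nonempty ∧ (Sreal n).Nonempty ∧
    (Siso n \ Sreal n).Nonempty ∧
    Sreal n ⊆ Siso n ∧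
    Dpos n ∪ Dneg n ∪ Siso n = Set.univ ∧
    ∀ x y, SameOrbitSp n x y ↔
      (x ∈ Dpos n ∧ y ∈ Dpos n) ∨ (x ∈ Dneg n ∧ y ∈ Dneg n) ∨
        (x ∈ Sreal n ∧ y ∈ Sreal n) ∨
          (x ∈ Siso n \ Sreal n ∧ y ∈ Siso n \ Sreal n) :=
  ⟨Dpos_nonempty (by omega), Dneg_nonempty (by omega), Sreal_nonempty (by omega),
    Siso_diff_Sreal_nonempty hn, Sreal_subset_Siso, Dpos_union_Dneg_union_Siso, sameOrbitSp_iff⟩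

end
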